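/- arXiv:2012.02009 — 4 statements merged into one kernel-verified Lean document; each statement's English description precedes it below -/
import Mathlib

section
/- Let λ_1,…,λ_m > 0 and let N_1,…,N_m ≥ 0 satisfy Σ N_i = S for a fixed S > 0. Then the quantity Σ_{i=1}^m [N_i/λ_i − ln(1 + N_i/λ_i)] is minimized uniquely at N_i = ζλ_i²/(1 − ζλ_i), where ζ ∈ (0, min_i 1/λ_i) is the unique constant with Σ_i ζλ_i²/(1 − ζλ_i) = S. -/
/-!
With `x = N / λ`, the cost of a channel is `x - log (1 + x)`, strictly convex in `N`. At
`N* = ζλ² / (1 - ζλ)` its slope is exactly `ζ`, so `ζ` is a Lagrange multiplier for the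
constraint `∑ N = S`: for `t = (1 + N/λ)(1 - ζλ)` one has
`cost N - cost N* - ζ (N - N*) = t - 1 - log t ≥ 0`, with equality only at `t = 1`, i.e. `N = N*`.
Summing over the channels, the linear terms cancel because `∑ N = ∑ N* = S`.
-/

open Finset

section LagrangeMultiplier

variable {ι : Type*} [Fintype ι] (F : ι → ℝ → ℝ) {x y : ι → ℝ} (ζ : ℝ)

lemma sum_add_mul_sub_eq_of_sum_eq (hsum : ∑ i, x i = ∑ i, y i) :
    ∑ i, (F i (y i) + ζ * (x i - y i)) = ∑ i, F i (y i) := by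
  rw [sum_add_distrib, ← mul_sum, sum_sub_distrib, hsum, sub_self, mul_zero, add_zero]

lemma sum_le_sum_of_add_mul_sub_le (hsum : ∑ i, x i = ∑ i, y i)
    (hle : ∀ i, F i (y i) + ζ * (x i - y i) ≤ F i (x i)) :
    ∑ i, F i (y i) ≤ ∑ i, F i (x i) := by
  rw [← sum_add_mul_sub_eq_of_sum_eq F ζ hsum]
  exact sum_le_sum fun i _ => hle i

lemma sum_lt_sum_of_add_mul_sub_lt (hsum : ∑ i, x i = ∑ i, y i)
    (hlt : ∀ i, x i ≠ y i → F i (y i) + ζ * (x i - y i) < F i (x i)) (hne : ∃ i, x i ≠ y i) :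
    ∑ i, F i (y i) < ∑ i, F i (x i) := by
  have hle i : F i (y i) + ζ * (x i - y i) ≤ F i (x i) := by
    rcases eq_or_ne (x i) (y i) with h | h
    · simp [h]
    · exact (hlt i h).le
  rw [← sum_add_mul_sub_eq_of_sum_eq F ζ hsum]
  obtain ⟨j, hj⟩ := hne
  exact sum_lt_sum (fun i _ => hle i) ⟨j, mem_univ j, hlt j hj⟩

end LagrangeMultiplier

noncomputable def channelCost (lam x : ℝ) : ℝ := x / lam - Real.log (1 + x / lam)

noncomputable def waterFilling (ζ lam : ℝ) : ℝ := ζ * lam ^ 2 / (1 - ζ * lam)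

lemma one_add_div_pos_of_neg_lt {lam N : ℝ} (hlam : 0 < lam) (hN : -lam < N) :
    0 < 1 + N / lam := by
  have : -1 < N / lam := by rwa [lt_div_iff₀ hlam, neg_one_mul]
  linarith

lemma one_add_waterFilling_div {ζ lam : ℝ} (hζ : ζ * lam < 1) :
    1 + waterFilling ζ lam / lam = (1 - ζ * lam)⁻¹ := by
  have hd : 1 - ζ * lam ≠ 0 := by linarith
  unfold waterFilling
  field_simp
  ring

section Channel

variable {lam ζ N : ℝ} (hlam : 0 < lam) (hζ : ζ * lam < 1) (hN : -lam < N)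
include hlam hζ hN

lemma channelCost_sub_waterFilling_eq :
    channelCost lam N - (channelCost lam (waterFilling ζ lam) + ζ * (N - waterFilling ζ lam))
      = (1 + N / lam) * (1 - ζ * lam) - 1 - Real.log ((1 + N / lam) * (1 - ζ * lam)) := by
  have hd : 1 - ζ * lam ≠ 0 := by linarith
  have ha : waterFilling ζ lam / lam - ζ * waterFilling ζ lam = ζ * lam := by
    unfold waterFilling; field_simp
  have hN' : N / lam * (ζ * lam) = ζ * N := by field_simp
  rw [Real.log_mul (one_add_div_pos_of_neg_lt hlam hN).ne' hd, channelCost, channelCost,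
    one_add_waterFilling_div hζ, Real.log_inv]
  linear_combination hN' - ha

lemma waterFilling_add_le_channelCost :
    channelCost lam (waterFilling ζ lam) + ζ * (N - waterFilling ζ lam) ≤ channelCost lam N := by
  have ht := mul_pos (one_add_div_pos_of_neg_lt hlam hN) (sub_pos.2 hζ)
  linarith [channelCost_sub_waterFilling_eq hlam hζ hN, Real.log_le_sub_one_of_pos ht]

lemma waterFilling_add_lt_channelCost (hne : N ≠ waterFilling ζ lam) :
    channelCost lam (waterFilling ζ lam) + ζ * (N - waterFilling ζ lam) < channelCost lam N := by
  have ht := mul_pos (one_add_div_pos_of_neg_lt hlam hN) (sub_pos.2 hζ)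
  have ht1 : (1 + N / lam) * (1 - ζ * lam) ≠ 1 := by
    intro h
    have h' : 1 + N / lam = 1 + waterFilling ζ lam / lam := by
      rw [one_add_waterFilling_div hζ]
      exact eq_inv_of_mul_eq_one_left h
    exact hne ((div_left_inj' hlam.ne').1 (add_left_cancel h'))
  linarith [channelCost_sub_waterFilling_eq hlam hζ hN, Real.log_lt_sub_one_of_pos ht ht1]

end Channel

theorem stmt3_general (m : ℕ) (lam : Fin m → ℝ) (hlam : ∀ i, 0 < lam i)
    (S : ℝ) (ζ : ℝ)
    (hζ1 : ∀ i, ζ < 1 / lam i)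
    (hζsum : ∑ i, ζ * (lam i) ^ 2 / (1 - ζ * lam i) = S)
    (N : Fin m → ℝ) (hN : ∀ i, 0 ≤ N i) (hNsum : ∑ i, N i = S) :
    (∑ i, (ζ * (lam i) ^ 2 / (1 - ζ * lam i) / lam i
        - Real.log (1 + ζ * (lam i) ^ 2 / (1 - ζ * lam i) / lam i)))
      ≤ ∑ i, (N i / lam i - Real.log (1 + N i / lam i)) ∧
    ((∑ i, (N i / lam i - Real.log (1 + N i / lam i)))
        = ∑ i, (ζ * (lam i) ^ 2 / (1 - ζ * lam i) / lam i
        - Real.log (1 + ζ * (lam i) ^ 2 / (1 - ζ * lam i) / lam i))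
      ↔ ∀ i, N i = ζ * (lam i) ^ 2 / (1 - ζ * lam i)) := by
  have hζlam i : ζ * lam i < 1 := (lt_div_iff₀ (hlam i)).1 (hζ1 i)
  have hNlam i : -lam i < N i := by linarith [hlam i, hN i]
  have hle i := waterFilling_add_le_channelCost (hlam i) (hζlam i) (hNlam i)
  have hlt i := waterFilling_add_lt_channelCost (hlam i) (hζlam i) (hNlam i)
  have hsum : ∑ i, N i = ∑ i, waterFilling ζ (lam i) := hNsum.trans hζsum.symm
  refine ⟨sum_le_sum_of_add_mul_sub_le (fun i => channelCost (lam i)) ζ hsum hle, ?_, ?_⟩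
  · intro heq
    by_contra! hne
    exact (sum_lt_sum_of_add_mul_sub_lt (fun i => channelCost (lam i)) ζ hsum hlt hne).ne' heq
  · intro h
    simp only [h]

theorem stmt3 (m : ℕ) (hm : 0 < m) (lam : Fin m → ℝ) (hlam : ∀ i, 0 < lam i)
    (S : ℝ) (hS : 0 < S) (ζ : ℝ)
    (hζ0 : 0 < ζ) (hζ1 : ∀ i, ζ < 1 / lam i)
    (hζsum : ∑ i, ζ * (lam i) ^ 2 / (1 - ζ * lam i) = S)
    (N : Fin m → ℝ) (hN : ∀ i, 0 ≤ N i) (hNsum : ∑ i, N i = S) :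
    (∑ i, (ζ * (lam i) ^ 2 / (1 - ζ * lam i) / lam i
        - Real.log (1 + ζ * (lam i) ^ 2 / (1 - ζ * lam i) / lam i)))
      ≤ ∑ i, (N i / lam i - Real.log (1 + N i / lam i)) ∧
    ((∑ i, (N i / lam i - Real.log (1 + N i / lam i)))
        = ∑ i, (ζ * (lam i) ^ 2 / (1 - ζ * lam i) / lam i
        - Real.log (1 + ζ * (lam i) ^ 2 / (1 - ζ * lam i) / lam i))
      ↔ ∀ i, N i = ζ * (lam i) ^ 2 / (1 - ζ * lam i)) :=
  stmt3_general m lam hlam S ζ hζ1 hζsum N hN hNsum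
end

section
/- Let A be a real symmetric positive semidefinite m×m matrix and Λ = diag(λ_1,…,λ_m) with all λ_i > 0. Then tr((A + Λ)Λ⁻¹) − ln det((A + Λ)Λ⁻¹) ≥ Σ_{i=1}^m [(a_ii + λ_i)/λ_i − ln((a_ii + λ_i)/λ_i)], where a_ii are the diagonal entries of A, with equality if A is diagonal. -/
/-!
With `M = A + Λ`, the trace of `M Λ⁻¹` is `∑ M i i / λ i` and its determinant is
`det M / ∏ λ i`, so the two sides differ exactly by `∑ log M i i - log det M`. This is
nonnegative by Hadamard's inequality and zero when `M` is diagonal. Hadamard's inequality itself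
follows by rescaling `M` to unit diagonal, where `log det ≤ tr - m` is `log x ≤ x - 1` summed
over the eigenvalues.
-/

open Matrix Finset

namespace Matrix

variable {n : Type*} [Fintype n] [DecidableEq n]

lemma PosDef.log_det_le_trace_sub_card {M : Matrix n n ℝ} (hM : M.PosDef) :
    Real.log M.det ≤ M.trace - Fintype.card n := by
  have hev := hM.eigenvalues_pos
  rw [hM.1.det_eq_prod_eigenvalues, hM.1.trace_eq_sum_eigenvalues]
  simp only [RCLike.ofReal_real_eq_id, id]
  calc Real.log (∏ i, hM.1.eigenvalues i) = ∑ i, Real.log (hM.1.eigenvalues i) :=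
        Real.log_prod fun i _ => (hev i).ne'
    _ ≤ ∑ i, (hM.1.eigenvalues i - 1) :=
        sum_le_sum fun i _ => Real.log_le_sub_one_of_pos (hev i)
    _ = ∑ i, hM.1.eigenvalues i - Fintype.card n := by simp [sum_sub_distrib]

theorem PosDef.det_le_prod_diag {M : Matrix n n ℝ} (hM : M.PosDef) : M.det ≤ ∏ i, M i i := by
  have hdiag : ∀ i, 0 < M i i := fun i => hM.diag_pos
  set d : n → ℝ := fun i => (Real.sqrt (M i i))⁻¹
  have hd_sq : ∀ i, d i * d i = (M i i)⁻¹ := fun i => by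
    rw [← mul_inv, Real.mul_self_sqrt (hdiag i).le]
  have hN : (diagonal d * M * diagonal d).PosDef := by
    have hd_unit : IsUnit (diagonal d) := isUnit_diagonal.2 <|
      Pi.isUnit_iff.2 fun i => (inv_pos.2 (Real.sqrt_pos.2 (hdiag i))).ne'.isUnit
    simpa using hM.conjTranspose_mul_mul_same (mulVec_injective_iff_isUnit.2 hd_unit)
  have hN_diag : ∀ i, (diagonal d * M * diagonal d) i i = 1 := fun i => by
    rw [mul_diagonal, diagonal_mul, mul_right_comm, hd_sq, inv_mul_cancel₀ (hdiag i).ne']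
  have hN_det : (diagonal d * M * diagonal d).det = M.det * (∏ i, M i i)⁻¹ := by
    rw [det_mul, det_mul, det_diagonal, mul_right_comm, ← prod_mul_distrib, mul_comm]
    simp only [hd_sq, prod_inv_distrib]
  have hN_trace : (diagonal d * M * diagonal d).trace = Fintype.card n := by
    simp [trace, hN_diag]
  have hN_det_le : (diagonal d * M * diagonal d).det ≤ 1 := by
    have := hN.log_det_le_trace_sub_card
    rw [hN_trace, sub_self] at this
    exact (Real.log_nonpos_iff hN.det_pos.le).1 this
  rwa [hN_det, mul_inv_le_iff₀ (prod_pos fun i _ => hdiag i), one_mul] at hN_det_le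

lemma inv_diagonal_of_ne_zero {K : Type*} [Field K] {d : n → K} (hd : ∀ i, d i ≠ 0) :
    (diagonal d)⁻¹ = diagonal fun i => (d i)⁻¹ :=
  inv_eq_right_inv <| by
    rw [diagonal_mul_diagonal, ← diagonal_one]
    exact congrArg diagonal (funext fun i => mul_inv_cancel₀ (hd i))

lemma trace_sub_log_det_mul_inv_diagonal {M : Matrix n n ℝ} {lam : n → ℝ}
    (hM : ∀ i, M i i ≠ 0) (hdet : M.det ≠ 0) (hlam : ∀ i, lam i ≠ 0) :
    (M * (diagonal lam)⁻¹).trace - Real.log (M * (diagonal lam)⁻¹).det =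
      ∑ i, (M i i / lam i - Real.log (M i i / lam i)) +
        (∑ i, Real.log (M i i) - Real.log M.det) := by
  have hprod : ∏ i, lam i ≠ 0 := prod_ne_zero_iff.2 fun i _ => hlam i
  rw [inv_diagonal_of_ne_zero hlam, det_mul, det_diagonal, prod_inv_distrib,
    Real.log_mul hdet (inv_ne_zero hprod), Real.log_inv, Real.log_prod fun i _ => hlam i]
  simp only [trace, diag, mul_diagonal, ← div_eq_mul_inv,
    Real.log_div (hM _) (hlam _), sum_sub_distrib]
  ring

end Matrix

theorem stmt6 (m : ℕ) (A : Matrix (Fin m) (Fin m) ℝ) (hA : A.PosSemidef)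
    (lam : Fin m → ℝ) (hlam : ∀ i, 0 < lam i) :
    (∑ i, ((A i i + lam i) / lam i - Real.log ((A i i + lam i) / lam i))) ≤
      ((A + Matrix.diagonal lam) * (Matrix.diagonal lam)⁻¹).trace
        - Real.log (((A + Matrix.diagonal lam) * (Matrix.diagonal lam)⁻¹).det) ∧
    (A = Matrix.diagonal (fun i => A i i) →
      ((A + Matrix.diagonal lam) * (Matrix.diagonal lam)⁻¹).trace
          - Real.log (((A + Matrix.diagonal lam) * (Matrix.diagonal lam)⁻¹).det)
        = ∑ i, ((A i i + lam i) / lam i - Real.log ((A i i + lam i) / lam i))) := by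
  set M := A + diagonal lam with hM_def
  have hM : M.PosDef := PosDef.posSemidef_add hA (posDef_diagonal_iff.2 hlam)
  have hM_diag : ∀ i, A i i + lam i = M i i := fun i => by simp [M]
  have hM_diag_ne : ∀ i, M i i ≠ 0 := fun i => hM.diag_pos.ne'
  rw [trace_sub_log_det_mul_inv_diagonal hM_diag_ne hM.det_pos.ne' fun i => (hlam i).ne']
  simp only [hM_diag]
  refine ⟨le_add_of_nonneg_right (sub_nonneg.2 ?_), fun hA_diag => ?_⟩
  · rw [← Real.log_prod fun i _ => hM_diag_ne i]
    exact Real.log_le_log hM.det_pos hM.det_le_prod_diag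
  · have hM_det : M.det = ∏ i, M i i := by
      rw [hM_def, hA_diag, diagonal_add, det_diagonal]
      simp
    rw [hM_det, Real.log_prod fun i _ => hM_diag_ne i, sub_self, add_zero]
end

section
/- Let Σ_y and Σ_n be real symmetric positive definite and positive semidefinite m×m matrices, and define F(Σ_n) = tr((Σ_n + Σ_y)Σ_y⁻¹) − ln det((Σ_n + Σ_y)Σ_y⁻¹) − m. Then F(Σ_n) ≥ 0 and F is monotone in the sense that if Σ_n' − Σ_n is positive semidefinite then F(Σ_n') ≥ F(Σ_n). -/
/-!
Conjugating by `Σ_y^{-1/2}` turns `(Σ_n + Σ_y) Σ_y⁻¹` into a positive definite matrix `N`, and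
`tr N - log det N - m = ∑ (λᵢ - 1 - log λᵢ) ≥ 0` over its eigenvalues. For monotonicity, put
`B = Σ_n + Σ_y ≤ B' = Σ_n' + Σ_y`: the increment of `log det` is
`log det (B' B⁻¹) ≤ tr ((B' - B) B⁻¹) ≤ tr ((B' - B) Σ_y⁻¹)`, the last step because inversion is
antitone on positive definite matrices and the trace of a product of two positive semidefinite
matrices is nonnegative.
-/

open Matrix
open scoped MatrixOrder ComplexOrder

namespace Matrix

variable {n 𝕜 : Type*} [Fintype n] [DecidableEq n] [RCLike 𝕜]

theorem PosSemidef.trace_mul_nonneg {D E : Matrix n n 𝕜} (hD : D.PosSemidef) (hE : E.PosSemidef) :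
    0 ≤ (D * E).trace := by
  have hsqrt : IsSelfAdjoint (CFC.sqrt E) := (CFC.sqrt_nonneg E).isSelfAdjoint
  have hconj : (CFC.sqrt E * D * (CFC.sqrt E)ᴴ).PosSemidef := hD.mul_mul_conjTranspose_same _
  rw [← star_eq_conjTranspose, hsqrt.star_eq] at hconj
  calc (0 : 𝕜) ≤ (CFC.sqrt E * D * CFC.sqrt E).trace := hconj.trace_nonneg
    _ = (D * E).trace := by
      rw [trace_mul_cycle, CFC.sqrt_mul_sqrt_self E hE.nonneg, trace_mul_comm]

theorem PosDef.inv_sub_inv_posSemidef {A B : Matrix n n 𝕜} (hA : A.PosDef)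
    (hAB : (B - A).PosSemidef) : (A⁻¹ - B⁻¹).PosSemidef := by
  have hB : B.PosDef := by simpa using hA.add_posSemidef hAB
  have hdA : IsUnit A.det := isUnit_iff_ne_zero.mpr hA.det_pos.ne'
  have hdB : IsUnit B.det := isUnit_iff_ne_zero.mpr hB.det_pos.ne'
  have hsplit : A⁻¹ - B⁻¹ = (A⁻¹ - B⁻¹)ᴴ * A * (A⁻¹ - B⁻¹) + (B⁻¹)ᴴ * (B - A) * B⁻¹ := by
    rw [(hA.inv.isHermitian.sub hB.inv.isHermitian).eq, hB.inv.isHermitian.eq]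
    simp only [sub_mul, mul_sub, mul_assoc, nonsing_inv_mul_cancel_left _ _ hdA,
      nonsing_inv_mul_cancel_left _ _ hdB, mul_nonsing_inv _ hdA, mul_one]
    abel
  rw [hsplit]
  exact (hA.posSemidef.conjTranspose_mul_mul_same _).add (hAB.conjTranspose_mul_mul_same _)

theorem PosDef.log_det_le_trace_sub_card_s9 {A : Matrix n n ℝ} (hA : A.PosDef) :
    Real.log A.det ≤ A.trace - Fintype.card n := by
  have hev := hA.eigenvalues_pos
  rw [hA.isHermitian.det_eq_prod_eigenvalues, hA.isHermitian.trace_eq_sum_eigenvalues]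
  simp only [RCLike.ofReal_real_eq_id, id_eq]
  rw [Real.log_prod fun i _ => (hev i).ne']
  calc ∑ i, Real.log (hA.isHermitian.eigenvalues i)
      ≤ ∑ i, (hA.isHermitian.eigenvalues i - 1) :=
        Finset.sum_le_sum fun i _ => Real.log_le_sub_one_of_pos (hev i)
    _ = _ := by simp [Finset.sum_sub_distrib]

theorem PosDef.log_det_mul_inv_le {A S : Matrix n n ℝ} (hA : A.PosDef) (hS : S.PosDef) :
    Real.log (A * S⁻¹).det ≤ (A * S⁻¹).trace - Fintype.card n := by
  set t := CFC.sqrt S⁻¹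
  have htt : t * t = S⁻¹ := CFC.sqrt_mul_sqrt_self _ hS.inv.posSemidef.nonneg
  have ht : star t = t := (CFC.sqrt_nonneg S⁻¹).isSelfAdjoint.star_eq
  have htu : IsUnit t := by
    rw [isUnit_iff_isUnit_det, isUnit_iff_ne_zero]
    intro h
    have := congrArg det htt
    rw [det_mul, h, zero_mul] at this
    exact hS.inv.det_pos.ne' this.symm
  have hconj : (t * A * t).PosDef := by
    simpa only [ht] using (IsUnit.posDef_star_right_conjugate_iff htu).mpr hA
  have htr : (t * A * t).trace = (A * S⁻¹).trace := by
    rw [trace_mul_cycle, htt, trace_mul_comm]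
  have hdet : (t * A * t).det = (A * S⁻¹).det := by
    rw [← htt, det_mul, det_mul, det_mul, det_mul]
    ring
  simpa only [htr, hdet] using hconj.log_det_le_trace_sub_card_s9

theorem PosDef.trace_sub_log_det_mul_inv_mono {S B B' : Matrix n n ℝ} (hS : S.PosDef)
    (hSB : S ≤ B) (hBB' : B ≤ B') :
    (B * S⁻¹).trace - Real.log (B * S⁻¹).det ≤ (B' * S⁻¹).trace - Real.log (B' * S⁻¹).det := by
  have hB : B.PosDef := by simpa using hS.add_posSemidef hSB
  have hB' : B'.PosDef := by simpa using hB.add_posSemidef hBB'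
  have hdB : IsUnit B.det := isUnit_iff_ne_zero.mpr hB.det_pos.ne'
  have hdet_pos {X Y : Matrix n n ℝ} (hX : X.PosDef) (hY : Y.PosDef) : 0 < (X * Y⁻¹).det := by
    rw [det_mul]
    exact mul_pos hX.det_pos hY.inv.det_pos
  have hdet : (B' * S⁻¹).det = (B' * B⁻¹).det * (B * S⁻¹).det := by
    rw [← det_mul, mul_assoc, nonsing_inv_mul_cancel_left _ _ hdB]
  have hlog := hB'.log_det_mul_inv_le hB
  have htr : (B' * B⁻¹).trace - Fintype.card n = ((B' - B) * B⁻¹).trace := by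
    rw [sub_mul, trace_sub, mul_nonsing_inv _ hdB, trace_one]
  have hcmp : 0 ≤ ((B' - B) * (S⁻¹ - B⁻¹)).trace :=
    PosSemidef.trace_mul_nonneg hBB' (hS.inv_sub_inv_posSemidef hSB)
  rw [hdet, Real.log_mul (hdet_pos hB' hB).ne' (hdet_pos hB hS).ne']
  simp only [mul_sub, sub_mul, trace_sub] at hcmp htr
  linarith

end Matrix

theorem stmt9 (m : ℕ) (Sy : Matrix (Fin m) (Fin m) ℝ) (hy : Sy.PosDef)
    (F : Matrix (Fin m) (Fin m) ℝ → ℝ)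
    (hF : ∀ Sn, F Sn = ((Sn + Sy) * Sy⁻¹).trace
        - Real.log (((Sn + Sy) * Sy⁻¹).det) - m) :
    (∀ Sn : Matrix (Fin m) (Fin m) ℝ, Sn.PosSemidef → 0 ≤ F Sn) ∧
    (∀ Sn Sn' : Matrix (Fin m) (Fin m) ℝ, Sn.PosSemidef →
      (Sn' - Sn).PosSemidef → F Sn ≤ F Sn') := by
  constructor
  · intro Sn hSn
    have h := (PosDef.posSemidef_add hSn hy).log_det_mul_inv_le hy
    rw [Fintype.card_fin] at h
    rw [hF]
    linarith
  · intro Sn Sn' hSn hSnSn'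
    have h := hy.trace_sub_log_det_mul_inv_mono (le_add_of_nonneg_left hSn.nonneg)
      (add_le_add_left (le_iff.mpr hSnSn') Sy)
    rw [hF, hF]
    linarith
end

section
/- Let S_y : [0, 2π] → ℝ be continuous and strictly positive, fix D' > 0, and let ζ ∈ (0, 1/max_ω S_y(ω)) satisfy (1/2π)∫_0^{2π} ζS_y(ω)²/(1 − ζS_y(ω)) dω = D'. Then among all continuous S_n̂ ≥ 0 with (1/2π)∫_0^{2π} S_n̂(ω) dω ≥ D', the functional (1/2π)∫_0^{2π}(1/2)[S_n̂(ω)/S_y(ω) − ln(1 + S_n̂(ω)/S_y(ω))] dω is minimized by S_n̂*(ω) = ζS_y(ω)²/(1 − ζS_y(ω)). -/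
/-!
For fixed `S > 0` the integrand `a ↦ (a / S - log (1 + a / S)) / 2` is convex, and its derivative
at `a* = ζ S² / (1 - ζ S)` is exactly `ζ / 2`, the same for every frequency. Hence the integrand lies
above its tangent line at `a*`, which integrates to
`∫ KL(Sn) ≥ ∫ KL(a*) + (ζ / 2) (∫ Sn - ∫ a*)`, and the bracket is nonnegative because `a*` meets the
power constraint with equality.
-/

open Real Set

noncomputable def klDensity (S a : ℝ) : ℝ := (1 / 2) * (a / S - log (1 + a / S))

lemma sub_log_tangent {u v : ℝ} (hu : 0 < u) (hv : 0 < v) :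
    v - log v + (1 - v⁻¹) * (u - v) ≤ u - log u := by
  have h := log_le_sub_one_of_pos (div_pos hu hv)
  rw [log_div hu.ne' hv.ne'] at h
  have hid : (1 - v⁻¹) * (u - v) = u - v - (u / v - 1) := by field_simp
  linarith

lemma klDensity_tangent {S a ζ : ℝ} (hS : 0 < S) (ha : -S < a) (hζS : ζ * S < 1) :
    klDensity S (ζ * S ^ 2 / (1 - ζ * S)) + ζ / 2 * (a - ζ * S ^ 2 / (1 - ζ * S))
      ≤ klDensity S a := by
  have ht : 0 < 1 - ζ * S := by linarith
  have hu : 0 < 1 + a / S := by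
    have : -1 < a / S := by rw [lt_div_iff₀ hS]; linarith
    linarith
  set a' := ζ * S ^ 2 / (1 - ζ * S)
  have hv_inv : (1 + a' / S)⁻¹ = 1 - ζ * S := by
    rw [inv_eq_iff_eq_inv]; simp only [a']; field_simp; ring
  have hv : 0 < 1 + a' / S := by rw [← inv_pos, hv_inv]; exact ht
  have h := sub_log_tangent hu hv
  have hlin : (1 - (1 + a' / S)⁻¹) * (1 + a / S - (1 + a' / S)) = ζ * (a - a') := by
    rw [hv_inv]; field_simp; ring
  unfold klDensity
  linarith

lemma ContinuousOn.klDensity {s : Set ℝ} {S a : ℝ → ℝ} (hS : ContinuousOn S s)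
    (ha : ContinuousOn a s) (hpos : ∀ x ∈ s, 0 < S x) (hdom : ∀ x ∈ s, -S x < a x) :
    ContinuousOn (fun x => klDensity (S x) (a x)) s := by
  have hq : ContinuousOn (fun x => a x / S x) s := ha.div hS fun x hx => (hpos x hx).ne'
  refine continuousOn_const.mul (hq.sub (ContinuousOn.log (continuousOn_const.add hq) ?_))
  intro x hx
  have : -1 < a x / S x := by rw [lt_div_iff₀ (hpos x hx)]; linarith [hdom x hx]
  linarith

lemma intervalIntegral.integral_le_of_lagrangian {a b c : ℝ} {f g u v : ℝ → ℝ} (hab : a ≤ b)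
    (hf : IntervalIntegrable f MeasureTheory.volume a b)
    (hg : IntervalIntegrable g MeasureTheory.volume a b)
    (hu : IntervalIntegrable u MeasureTheory.volume a b)
    (hv : IntervalIntegrable v MeasureTheory.volume a b) (hc : 0 ≤ c)
    (hpt : ∀ x ∈ Icc a b, g x + c * (u x - v x) ≤ f x)
    (hconstr : ∫ x in a..b, v x ≤ ∫ x in a..b, u x) :
    ∫ x in a..b, g x ≤ ∫ x in a..b, f x := by
  have hmono := integral_mono_on hab (hg.add ((hu.sub hv).const_mul c)) hf hpt
  rw [integral_add hg ((hu.sub hv).const_mul c), integral_const_mul, integral_sub hu hv] at hmono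
  linarith [mul_nonneg hc (sub_nonneg.mpr hconstr)]

theorem stmt14_general (Sy : ℝ → ℝ)
    (hSy : ContinuousOn Sy (Set.Icc 0 (2 * π)))
    (hpos : ∀ ω ∈ Set.Icc 0 (2 * π), 0 < Sy ω)
    (M : ℝ) (hM : IsGreatest (Sy '' Set.Icc 0 (2 * π)) M)
    (D' : ℝ)
    (ζ : ℝ) (hζ : ζ ∈ Set.Ioo 0 (1 / M))
    (hζeq : (1 / (2 * π)) * ∫ ω in (0:ℝ)..(2 * π),
        ζ * (Sy ω) ^ 2 / (1 - ζ * Sy ω) = D') :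
    ∀ Sn : ℝ → ℝ, ContinuousOn Sn (Set.Icc 0 (2 * π)) →
      (∀ ω ∈ Set.Icc 0 (2 * π), 0 ≤ Sn ω) →
      D' ≤ (1 / (2 * π)) * ∫ ω in (0:ℝ)..(2 * π), Sn ω →
      (1 / (2 * π)) * ∫ ω in (0:ℝ)..(2 * π),
          (1 / 2) * ((ζ * (Sy ω) ^ 2 / (1 - ζ * Sy ω)) / Sy ω
            - Real.log (1 + (ζ * (Sy ω) ^ 2 / (1 - ζ * Sy ω)) / Sy ω))
        ≤ (1 / (2 * π)) * ∫ ω in (0:ℝ)..(2 * π),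
          (1 / 2) * (Sn ω / Sy ω - Real.log (1 + Sn ω / Sy ω)) := by
  intro Sn hSnc hSnn hSnD
  have h2π : (0 : ℝ) ≤ 2 * π := by positivity
  have hζS : ∀ ω ∈ Icc 0 (2 * π), ζ * Sy ω < 1 := by
    obtain ⟨⟨ω₀, hω₀, rfl⟩, hmax⟩ := hM
    intro ω hω
    have hζM := (lt_div_iff₀ (hpos ω₀ hω₀)).mp hζ.2
    nlinarith [hmax ⟨ω, hω, rfl⟩, hζ.1]
  have hSn_dom : ∀ ω ∈ Icc 0 (2 * π), -Sy ω < Sn ω := fun ω hω => by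
    linarith [hpos ω hω, hSnn ω hω]
  have hstar : ContinuousOn (fun ω => ζ * Sy ω ^ 2 / (1 - ζ * Sy ω)) (Icc 0 (2 * π)) :=
    (continuousOn_const.mul (hSy.pow 2)).div (continuousOn_const.sub (continuousOn_const.mul hSy))
      fun ω hω => (sub_pos.mpr (hζS ω hω)).ne'
  have hstar_dom : ∀ ω ∈ Icc 0 (2 * π), -Sy ω < ζ * Sy ω ^ 2 / (1 - ζ * Sy ω) := fun ω hω => by
    have : 0 ≤ ζ * Sy ω ^ 2 / (1 - ζ * Sy ω) := by
      have := sub_pos.mpr (hζS ω hω); have := hζ.1; positivity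
    linarith [hpos ω hω]
  refine mul_le_mul_of_nonneg_left ?_ (by positivity)
  refine intervalIntegral.integral_le_of_lagrangian (c := ζ / 2) h2π ?_ ?_
    (hSnc.intervalIntegrable_of_Icc h2π) (hstar.intervalIntegrable_of_Icc h2π)
    (by linarith [hζ.1]) (fun ω hω => klDensity_tangent (hpos ω hω) (hSn_dom ω hω) (hζS ω hω))
    (le_of_mul_le_mul_left (hζeq.trans_le hSnD) (by positivity))
  · exact (hSy.klDensity hSnc hpos hSn_dom).intervalIntegrable_of_Icc h2π
  · exact (hSy.klDensity hstar hpos hstar_dom).intervalIntegrable_of_Icc h2π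

theorem stmt14 (Sy : ℝ → ℝ)
    (hSy : ContinuousOn Sy (Set.Icc 0 (2 * π)))
    (hpos : ∀ ω ∈ Set.Icc 0 (2 * π), 0 < Sy ω)
    (M : ℝ) (hM : IsGreatest (Sy '' Set.Icc 0 (2 * π)) M)
    (D' : ℝ) (hD' : 0 < D')
    (ζ : ℝ) (hζ : ζ ∈ Set.Ioo 0 (1 / M))
    (hζeq : (1 / (2 * π)) * ∫ ω in (0:ℝ)..(2 * π),
        ζ * (Sy ω) ^ 2 / (1 - ζ * Sy ω) = D') :
    ∀ Sn : ℝ → ℝ, ContinuousOn Sn (Set.Icc 0 (2 * π)) →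
      (∀ ω ∈ Set.Icc 0 (2 * π), 0 ≤ Sn ω) →
      D' ≤ (1 / (2 * π)) * ∫ ω in (0:ℝ)..(2 * π), Sn ω →
      (1 / (2 * π)) * ∫ ω in (0:ℝ)..(2 * π),
          (1 / 2) * ((ζ * (Sy ω) ^ 2 / (1 - ζ * Sy ω)) / Sy ω
            - Real.log (1 + (ζ * (Sy ω) ^ 2 / (1 - ζ * Sy ω)) / Sy ω))
        ≤ (1 / (2 * π)) * ∫ ω in (0:ℝ)..(2 * π),
          (1 / 2) * (Sn ω / Sy ω - Real.log (1 + Sn ω / Sy ω)) :=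
  stmt14_general Sy hSy hpos M hM D' ζ hζ hζeq
end
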